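/- Let m, k_B, a, ε > 0 be constants. Let Θ, N, φ : ℝ³ → ℝ and u : ℝ³ → ℝ³ be differentiable fields with Θ(x) > 0 and 0 < N(x) < 1 for all x. Define the density ρ := m N a⁻³, the hard-core pressure P := −k_B Θ a⁻³ log(1−N), the canonical fields β := 1/(k_B Θ), ζⁱ := −uⁱ/(k_B Θ), ξ := −m φ/(k_B Θ) − log N + log(1−N) + (3/2) log(2π m k_B Θ/ε²) + m|u|²/(2 k_B Θ), and the force fᵢ := −∂ᵢφ. Then at every point x ∈ ℝ³ the entropy-production expression Σᵢ ζⁱ ρ fᵢ + Σⱼ (ρ uʲ/m) ∂ⱼξ + Σᵢⱼ (ρ uⁱ uʲ + δⁱʲ P) ∂ⱼζⁱ + Σⱼ ρ uʲ (3 k_B Θ/(2m) + P/ρ + |u|²/2 + φ) ∂ⱼβ + a⁻³ Σⱼ uʲ ∂ⱼN/(1−N) − a⁻³ log(1−N) Σⱼ ∂ⱼuʲ equals zero. -/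

import Mathlib

/-!
The derivatives of β = 1/(k_B Θ), ζ = -u/(k_B Θ) and ξ follow from the chain rule; substituting
them turns the expression into a rational function of the values of Θ, N, φ, u and their first
derivatives at the point, which vanishes identically. The force term cancels the φ-gradient in
∂ξ, the thermal and kinetic parts of ∂ξ and ∂ζ cancel those of ∂β, and the occupation part of ∂ξ,
-∂N/(N(1-N)), cancels a⁻³ u·∂N/(1-N). The hard-core pressure enters through
-a⁻³ log(1-N) = P/(k_B Θ), which makes the last term cancel the pressure part of ∂ζ.
-/

open Real

noncomputable def pd (j : Fin 3) (f : (Fin 3 → ℝ) → ℝ) (x : Fin 3 → ℝ) : ℝ :=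
  fderiv ℝ f x (Pi.single j 1)

section Calculus

variable {f g : (Fin 3 → ℝ) → ℝ} {x : Fin 3 → ℝ} (j : Fin 3)

theorem pd_const (c : ℝ) : pd j (fun _ => c) x = 0 := by
  simp [pd]

theorem pd_add (hf : DifferentiableAt ℝ f x) (hg : DifferentiableAt ℝ g x) :
    pd j (fun y => f y + g y) x = pd j f x + pd j g x := by
  simp [pd, fderiv_fun_add hf hg]

theorem pd_sub (hf : DifferentiableAt ℝ f x) (hg : DifferentiableAt ℝ g x) :
    pd j (fun y => f y - g y) x = pd j f x - pd j g x := by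
  simp [pd, fderiv_fun_sub hf hg]

theorem pd_neg : pd j (fun y => -f y) x = -pd j f x := by
  simp [pd]

theorem pd_mul (hf : DifferentiableAt ℝ f x) (hg : DifferentiableAt ℝ g x) :
    pd j (fun y => f y * g y) x = pd j f x * g x + f x * pd j g x := by
  simp only [pd, fderiv_fun_mul hf hg, add_apply, smul_apply, smul_eq_mul]
  ring

theorem pd_inv (hg : DifferentiableAt ℝ g x) (hg0 : g x ≠ 0) :
    pd j (fun y => (g y)⁻¹) x = -pd j g x / g x ^ 2 := by
  have h := ((hasDerivAt_inv hg0).comp_hasFDerivAt x hg.hasFDerivAt).fderiv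
  simp only [Function.comp_def, neg_smul, pd] at h ⊢
  simp [h, div_eq_inv_mul]

theorem pd_div (hf : DifferentiableAt ℝ f x) (hg : DifferentiableAt ℝ g x) (hg0 : g x ≠ 0) :
    pd j (fun y => f y / g y) x = (pd j f x * g x - f x * pd j g x) / g x ^ 2 := by
  simp only [div_eq_mul_inv]
  rw [pd_mul (g := fun y => (g y)⁻¹) j hf (hg.inv hg0), pd_inv j hg hg0]
  field_simp
  ring

theorem pd_pow (hf : DifferentiableAt ℝ f x) (n : ℕ) :
    pd j (fun y => f y ^ n) x = n * f x ^ (n - 1) * pd j f x := by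
  simp [pd, fderiv_fun_pow n hf]

theorem pd_log (hf : DifferentiableAt ℝ f x) (hf0 : f x ≠ 0) :
    pd j (fun y => Real.log (f y)) x = pd j f x / f x := by
  simp [pd, fderiv.log hf hf0, div_eq_inv_mul]

theorem pd_sum {ι : Type*} (s : Finset ι) {F : ι → (Fin 3 → ℝ) → ℝ}
    (hF : ∀ i ∈ s, DifferentiableAt ℝ (F i) x) :
    pd j (fun y => ∑ i ∈ s, F i y) x = ∑ i ∈ s, pd j (F i) x := by
  simp [pd, fderiv_fun_sum hF]

end Calculus

section CanonicalFields

variable {kB : ℝ} {Θ : (Fin 3 → ℝ) → ℝ} {x : Fin 3 → ℝ} (j : Fin 3)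

theorem pd_inv_temperature (hΘ : DifferentiableAt ℝ Θ x) (hkB : kB ≠ 0) (hΘ0 : Θ x ≠ 0) :
    pd j (fun y => 1 / (kB * Θ y)) x = -pd j Θ x / (kB * Θ x ^ 2) := by
  have hT : kB * Θ x ≠ 0 := mul_ne_zero hkB hΘ0
  rw [pd_div j (differentiableAt_const _) (hΘ.const_mul kB) hT, pd_const,
    pd_mul j (differentiableAt_const _) hΘ, pd_const]
  field_simp
  ring

theorem pd_neg_div_temperature {v : (Fin 3 → ℝ) → ℝ} (hv : DifferentiableAt ℝ v x)
    (hΘ : DifferentiableAt ℝ Θ x) (hkB : kB ≠ 0) (hΘ0 : Θ x ≠ 0) :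
    pd j (fun y => -v y / (kB * Θ y)) x
      = (v x * pd j Θ x / Θ x - pd j v x) / (kB * Θ x) := by
  have hT : kB * Θ x ≠ 0 := mul_ne_zero hkB hΘ0
  rw [pd_div (f := fun y => -v y) j hv.neg (hΘ.const_mul kB) hT, pd_neg,
    pd_mul j (differentiableAt_const _) hΘ, pd_const]
  field_simp
  ring

theorem pd_xi {m ε : ℝ} {N φ : (Fin 3 → ℝ) → ℝ} {u : (Fin 3 → ℝ) → Fin 3 → ℝ}
    (hΘ : DifferentiableAt ℝ Θ x) (hN : DifferentiableAt ℝ N x) (hφ : DifferentiableAt ℝ φ x)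
    (hu : ∀ i, DifferentiableAt ℝ (fun y => u y i) x)
    (hm : m ≠ 0) (hkB : kB ≠ 0) (hε : ε ≠ 0) (hΘ0 : Θ x ≠ 0) (hN0 : N x ≠ 0) (hN1 : 1 - N x ≠ 0) :
    pd j (fun y => -(m * φ y) / (kB * Θ y) - Real.log (N y) + Real.log (1 - N y)
      + (3 / 2) * Real.log (2 * π * m * kB * Θ y / ε ^ 2)
      + m * (∑ i, u y i ^ 2) / (2 * kB * Θ y)) x
    = (m * φ x * pd j Θ x / Θ x - m * pd j φ x) / (kB * Θ x)
      - pd j N x / (N x * (1 - N x)) + 3 * pd j Θ x / (2 * Θ x)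
      + m * (∑ i, u x i * pd j (fun y => u y i) x) / (kB * Θ x)
      - m * (∑ i, u x i ^ 2) * pd j Θ x / (2 * kB * Θ x ^ 2) := by
  have hT : kB * Θ x ≠ 0 := mul_ne_zero hkB hΘ0
  have hT2 : 2 * kB * Θ x ≠ 0 := by simp [*]
  have hε2 : ε ^ 2 ≠ 0 := pow_ne_zero 2 hε
  have hZ : 2 * π * m * kB * Θ x / ε ^ 2 ≠ 0 := by simp [*, Real.pi_ne_zero]
  simp (disch := first | assumption | fun_prop (disch := assumption)) only
    [pd_add, pd_sub, pd_neg, pd_mul, pd_div, pd_log, pd_const, pd_pow, pd_sum]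
  simp only [Nat.cast_ofNat, Nat.add_one_sub_one, pow_one, mul_assoc, ← Finset.mul_sum]
  field_simp
  ring

end CanonicalFields

/-- **Zero entropy production with the hard-core pressure.**
With the pressure taken to be the equilibrium pressure `P = -k_B Θ a⁻³ log (1 - N)` of the
hard-core lattice gas, the entropy-production expression vanishes identically. -/
theorem entropy_production_zero_hard_core
    (m kB a ε : ℝ) (hm : 0 < m) (hkB : 0 < kB) (ha : 0 < a) (hε : 0 < ε)
    (Θ N φ : (Fin 3 → ℝ) → ℝ) (u : (Fin 3 → ℝ) → Fin 3 → ℝ)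
    (hΘ : Differentiable ℝ Θ) (hN : Differentiable ℝ N) (hφ : Differentiable ℝ φ)
    (hu : ∀ i, Differentiable ℝ (fun x => u x i))
    (hΘpos : ∀ x, 0 < Θ x) (hN0 : ∀ x, 0 < N x) (hN1 : ∀ x, N x < 1)
    (ρ P β ξ : (Fin 3 → ℝ) → ℝ) (ζ f : (Fin 3 → ℝ) → Fin 3 → ℝ)
    (hρ : ρ = fun x => m * N x / a ^ 3)
    (hP : P = fun x => -(kB * Θ x / a ^ 3) * Real.log (1 - N x))
    (hβ : β = fun x => 1 / (kB * Θ x))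
    (hζ : ζ = fun x i => -(u x i) / (kB * Θ x))
    (hξ : ξ = fun x => -(m * φ x) / (kB * Θ x) - Real.log (N x) + Real.log (1 - N x)
      + (3 / 2) * Real.log (2 * π * m * kB * Θ x / ε ^ 2)
      + m * (∑ i, u x i ^ 2) / (2 * kB * Θ x))
    (hf : f = fun x i => -(pd i φ x)) :
    ∀ x : Fin 3 → ℝ,
      (∑ i, ζ x i * ρ x * f x i)
      + (∑ j, (ρ x * u x j / m) * pd j ξ x)
      + (∑ i, ∑ j, (ρ x * u x i * u x j + (if i = j then P x else 0))
          * pd j (fun y => ζ y i) x)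
      + (∑ j, ρ x * u x j
          * (3 * kB * Θ x / (2 * m) + P x / ρ x + (∑ i, u x i ^ 2) / 2 + φ x)
          * pd j β x)
      + (a ^ 3)⁻¹ * (∑ j, u x j * pd j N x / (1 - N x))
      - (a ^ 3)⁻¹ * Real.log (1 - N x) * (∑ j, pd j (fun y => u y j) x) = 0 := by
  subst hρ hP hβ hζ hξ hf
  intro x
  have hΘx := (hΘpos x).ne'
  have hNx := (hN0 x).ne'
  have hN1x : 1 - N x ≠ 0 := (sub_pos.2 (hN1 x)).ne'
  have dβ (j : Fin 3) := pd_inv_temperature j (hΘ x) hkB.ne' hΘx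
  have dζ (i j : Fin 3) := pd_neg_div_temperature j (hu i x) (hΘ x) hkB.ne' hΘx
  have dξ (j : Fin 3) := pd_xi j (hΘ x) (hN x) (hφ x) (fun i => hu i x)
    hm.ne' hkB.ne' hε.ne' hΘx hNx hN1x
  simp only [dβ, dζ, dξ]
  simp only [Fin.sum_univ_three, Fin.isValue, Fin.reduceEq, if_true, if_false]
  field_simp
  ring
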